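/- arXiv:1802.07453 — 2 statements merged into one kernel-verified Lean document; each statement's English description precedes it below -/
import Mathlib

section
/- Let H, K : ℝ^{2n} × ℝ × ℝ → ℝ be smooth, 1-periodic in both time variables, written H_{t,τ}(x) and K_{t,τ}(x). Define 𝒜(v) = ∫₀¹ p(t)·q̇(t) dt − ∫₀¹ ∫₀¹ H_{t,τ}(v(t)) K_{t,τ}(v(t−τ)) dτ dt on loops v = (q,p). Then every critical point v of 𝒜 satisfies v̇(t) = ∫₀¹ [ H_{t+τ,τ}(v(t+τ)) X_{K_{t+τ,τ}}(v(t)) + K_{t,τ}(v(t−τ)) X_{H_{t,τ}}(v(t)) ] dτ for all t ∈ ℝ, where X_{H_{t,τ}} denotes the Hamiltonian vector field of x ↦ H_{t,τ}(x). -/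
open MeasureTheory intervalIntegral Real

noncomputable section

/-- Phase space ℝ^{2n}, with points written v = (q, p). -/
abbrev Phase (n : ℕ) := (Fin n → ℝ) × (Fin n → ℝ)

/-- The standard symplectic form ω(u,w) = Σ_j (u^q_j w^p_j − u^p_j w^q_j). -/
def symForm {n : ℕ} (u w : Phase n) : ℝ :=
  ∑ j, (u.1 j * w.2 j - u.2 j * w.1 j)

/-- The Hamiltonian vector field X_H = (∂H/∂p, −∂H/∂q). -/
def hamVF {n : ℕ} (H : Phase n → ℝ) (x : Phase n) : Phase n :=
  (fun i => fderiv ℝ H x (0, Pi.single i 1),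
   fun i => -fderiv ℝ H x (Pi.single i 1, 0))

/-- A loop is a smooth 1-periodic map ℝ → ℝ^{2n}. -/
def IsLoop {n : ℕ} (v : ℝ → Phase n) : Prop :=
  ContDiff ℝ (⊤ : ℕ∞) v ∧ ∀ t, v (t + 1) = v t

/-- First variation of a functional 𝒜 at v in direction v̂. -/
def firstVariation {n : ℕ} (A : (ℝ → Phase n) → ℝ) (v vh : ℝ → Phase n) : ℝ :=
  deriv (fun s : ℝ => A (fun t => v t + s • vh t)) 0

/-- v is a critical point of 𝒜 if the first variation vanishes in all loop directions. -/
def IsCritPt {n : ℕ} (A : (ℝ → Phase n) → ℝ) (v : ℝ → Phase n) : Prop :=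
  ∀ vh, IsLoop vh → firstVariation A v vh = 0

end

/-! ### Auxiliary lemmas -/

section AuxLemmas
open Set

/-- Differentiation under the interval integral for continuous data. -/
lemma hasDerivAt_param {V : Type*} [NormedAddCommGroup V] [NormedSpace ℝ V] [CompleteSpace V]
    (F F' : ℝ → ℝ → V) (hF : Continuous (Function.uncurry F))
    (hF' : Continuous (Function.uncurry F'))
    (hd : ∀ s t, HasDerivAt (fun u => F u t) (F' s t) s) (s₀ : ℝ) :
    HasDerivAt (fun s => ∫ t in (0:ℝ)..1, F s t) (∫ t in (0:ℝ)..1, F' s₀ t) s₀ := by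
  obtain ⟨C, hC⟩ := ((isCompact_closedBall s₀ 1).prod
    (isCompact_Icc (a := (0:ℝ)) (b := 1))).exists_bound_of_continuousOn hF'.continuousOn
  have hmem : ∀ t ∈ Set.uIoc (0:ℝ) 1, ∀ x ∈ Metric.ball s₀ 1, ‖F' x t‖ ≤ C := by
    intro t ht x hx
    have ht' : t ∈ Icc (0:ℝ) 1 := Ioc_subset_Icc_self (by rwa [Set.uIoc_of_le zero_le_one] at ht)
    exact hC (x, t) ⟨Metric.ball_subset_closedBall hx, ht'⟩
  refine (intervalIntegral.hasDerivAt_integral_of_dominated_loc_of_deriv_le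
    (F := F) (F' := F') (bound := fun _ => C) (Metric.ball_mem_nhds s₀ one_pos) ?_ ?_ ?_ ?_ ?_ ?_).2
  · exact Filter.Eventually.of_forall fun x =>
      ((hF.comp (continuous_const.prodMk continuous_id)).aestronglyMeasurable).restrict
  · exact (hF.comp (continuous_const.prodMk continuous_id)).intervalIntegrable 0 1
  · exact ((hF'.comp (continuous_const.prodMk continuous_id)).aestronglyMeasurable).restrict
  · exact Filter.Eventually.of_forall hmem
  · exact intervalIntegrable_const
  · exact Filter.Eventually.of_forall fun t _ x _ => hd x t

/-- Fubini on the unit box for continuous integrands. -/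
lemma fubini_box {f : ℝ → ℝ → ℝ} (hf : Continuous (Function.uncurry f)) :
    (∫ t in (0:ℝ)..1, ∫ τ in (0:ℝ)..1, f t τ) = ∫ τ in (0:ℝ)..1, ∫ t in (0:ℝ)..1, f t τ := by
  haveI hfin : IsFiniteMeasure (volume.restrict (Ioc (0:ℝ) 1)) :=
    ⟨by simp [Measure.restrict_apply_univ]⟩
  obtain ⟨C, hC⟩ := ((isCompact_Icc (a := (0:ℝ)) (b := 1)).prod
    (isCompact_Icc (a := (0:ℝ)) (b := 1))).exists_bound_of_continuousOn hf.continuousOn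
  have hint : Integrable (Function.uncurry f)
      ((volume.restrict (Ioc (0:ℝ) 1)).prod (volume.restrict (Ioc (0:ℝ) 1))) := by
    refine (integrable_const C).mono' hf.aestronglyMeasurable ?_
    rw [Measure.prod_restrict]
    rw [ae_restrict_iff' (measurableSet_Ioc.prod measurableSet_Ioc)]
    refine Filter.Eventually.of_forall fun z hz => ?_
    exact hC z ⟨Ioc_subset_Icc_self hz.1, Ioc_subset_Icc_self hz.2⟩
  simp_rw [intervalIntegral.integral_of_le zero_le_one]
  exact MeasureTheory.integral_integral_swap hint

/-- A continuous 1-periodic real function whose integrals against cos(2πkt), sin(2πkt) all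
vanish is identically zero. -/
lemma fourier_vanish (g : ℝ → ℝ) (hg : Continuous g) (hper : ∀ t, g (t + 1) = g t)
    (hcs : ∀ k : ℤ, (∫ t in (0:ℝ)..1, Real.cos (2*π*k*t) * g t) = 0
      ∧ (∫ t in (0:ℝ)..1, Real.sin (2*π*k*t) * g t) = 0) :
    ∀ t, g t = 0 := by
  haveI : Fact ((0:ℝ) < 1) := ⟨one_pos⟩
  set gC : ℝ → ℂ := fun t => (g t : ℂ) with hgC
  have hgCcont : Continuous gC := Complex.continuous_ofReal.comp hg
  set G : AddCircle (1:ℝ) → ℂ := AddCircle.liftIco 1 0 gC with hG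
  have hG01 : gC 0 = gC (0 + 1) := by
    have := hper 0
    rw [zero_add] at this
    simp [hgC, this]
  have hGcont : Continuous G := AddCircle.liftIco_continuous hG01 hgCcont.continuousOn
  -- the lift agrees with gC everywhere
  have hfrac : ∀ x : ℝ, gC x = gC (Int.fract x) := by
    intro x
    have hper' : Function.Periodic g 1 := hper
    have h1 : Int.fract x = x - (⌊x⌋ : ℝ) := eq_sub_of_add_eq (Int.fract_add_floor x)
    have h2 := hper'.sub_int_mul_eq (x := x) ⌊x⌋
    rw [mul_one] at h2
    simp only [hgC, h1, h2]
  have hGx : ∀ x : ℝ, G (↑x : AddCircle (1:ℝ)) = gC x := by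
    intro x
    have hcoe : ((x : ℝ) : AddCircle (1:ℝ)) = ((Int.fract x : ℝ) : AddCircle (1:ℝ)) := by
      have h0 : ((x - Int.fract x : ℝ) : AddCircle (1:ℝ)) = 0 := by
        rw [AddCircle.coe_eq_zero_iff]
        refine ⟨⌊x⌋, ?_⟩
        rw [zsmul_eq_mul, mul_one]
        have := Int.fract_add_floor x
        linarith
      rw [AddCircle.coe_sub, sub_eq_zero] at h0
      exact h0
    rw [hcoe, hG]
    have hmem : Int.fract x ∈ Ico (0:ℝ) (0 + 1) := by
      rw [zero_add]; exact ⟨Int.fract_nonneg x, Int.fract_lt_one x⟩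
    rw [AddCircle.liftIco_coe_apply hmem]
    exact (hfrac x).symm
  -- all Fourier coefficients of G vanish
  have hcoeff : ∀ k : ℤ, fourierCoeff G k = 0 := by
    intro k
    rw [fourierCoeff_eq_intervalIntegral G k 0, smul_eq_zero]
    refine Or.inr ?_
    have hptwise : ∀ x : ℝ, (fourier (-k)) (↑x : AddCircle (1:ℝ)) • G (↑x : AddCircle (1:ℝ))
        = ((Real.cos (2*π*(-k:ℤ)*x) * g x : ℝ) : ℂ)
          + ((Real.sin (2*π*(-k:ℤ)*x) * g x : ℝ) : ℂ) * Complex.I := by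
      intro x
      rw [hGx x, fourier_coe_apply]
      have : 2 * ↑π * Complex.I * ↑(-k : ℤ) * ↑x / ↑(1:ℝ)
          = ((2 * π * (-k:ℤ) * x : ℝ) : ℂ) * Complex.I := by
        push_cast; ring
      rw [this, Complex.exp_mul_I, ← Complex.ofReal_cos, ← Complex.ofReal_sin, smul_eq_mul]
      simp only [hgC]
      push_cast
      ring
    refine Eq.trans (intervalIntegral.integral_congr
      (g := fun x => (((Real.cos (2*π*(-k:ℤ)*x) * g x : ℝ) : ℂ)
        + ((Real.sin (2*π*(-k:ℤ)*x) * g x : ℝ) : ℂ) * Complex.I)) fun x _ => hptwise x) ?_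
    rw [intervalIntegral.integral_add
      (Continuous.intervalIntegrable (by fun_prop) _ _)
      (Continuous.intervalIntegrable (by fun_prop) _ _)]
    rw [intervalIntegral.integral_mul_const, intervalIntegral.integral_ofReal,
      intervalIntegral.integral_ofReal]
    norm_num
    rw [(hcs k).1, (hcs k).2]
    simp
  -- Parseval: the L² norm of G vanishes
  set GC : C(AddCircle (1:ℝ), ℂ) := ⟨G, hGcont⟩ with hGCdef
  have hpars := tsum_sq_fourierCoeff (ContinuousMap.toLp (E := ℂ) 2 AddCircle.haarAddCircle ℂ GC)
  have hzero : (∫ t : AddCircle (1:ℝ),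
      ‖(((ContinuousMap.toLp (E := ℂ) 2 AddCircle.haarAddCircle ℂ) GC : Lp ℂ 2 _) : AddCircle (1:ℝ) → ℂ) t‖ ^ 2
        ∂AddCircle.haarAddCircle) = 0 := by
    rw [← hpars]
    have : ∀ i : ℤ, fourierCoeff
        ((((ContinuousMap.toLp (E := ℂ) 2 AddCircle.haarAddCircle ℂ) GC : Lp ℂ 2 _)) : AddCircle (1:ℝ) → ℂ) i = 0 := by
      intro i
      rw [fourierCoeff_toLp]
      exact hcoeff i
    simp only [this, norm_zero]
    simp
  have hae := (ContinuousMap.coeFn_toLp (p := 2) AddCircle.haarAddCircle (𝕜 := ℂ) GC)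
  have hzero2 : (∫ t : AddCircle (1:ℝ), ‖G t‖ ^ 2 ∂AddCircle.haarAddCircle) = 0 := by
    rw [← hzero]
    refine integral_congr_ae ?_
    filter_upwards [hae] with x hx
    rw [hx]
    rfl
  -- conclude G = 0 pointwise
  have hint : Integrable (fun t => ‖G t‖ ^ 2) AddCircle.haarAddCircle := by
    have : Continuous fun t => ‖G t‖ ^ 2 := by fun_prop
    exact this.integrable_of_hasCompactSupport (HasCompactSupport.of_compactSpace _)
  have haez : (fun t => ‖G t‖ ^ 2) =ᶠ[ae AddCircle.haarAddCircle] 0 :=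
    (integral_eq_zero_iff_of_nonneg (fun t => by positivity) hint).mp hzero2
  have hGzero : (fun t => ‖G t‖ ^ 2) = 0 :=
    (Continuous.ae_eq_iff_eq AddCircle.haarAddCircle (by fun_prop) continuous_const).mp haez
  have hGz : ∀ x, G x = 0 := by
    intro x
    have := congrFun hGzero x
    simp only [Pi.zero_apply, pow_eq_zero_iff, norm_eq_zero] at this
    simpa using this
  intro t
  have h2 := hGz (↑t : AddCircle (1:ℝ))
  rw [hGx t] at h2
  simp only [hgC] at h2
  exact_mod_cast h2

variable {n : ℕ}

lemma sum_smul_single (u : Fin n → ℝ) : ∑ j, u j • (Pi.single j 1 : Fin n → ℝ) = u := by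
  calc ∑ j, u j • (Pi.single j 1 : Fin n → ℝ)
      = ∑ j, (Pi.single j (u j) : Fin n → ℝ) :=
        Finset.sum_congr rfl fun j _ => by rw [← Pi.single_smul, smul_eq_mul, mul_one]
    _ = u := Finset.univ_sum_single u

lemma symForm_smul_left (c : ℝ) (u w : Phase n) : symForm (c • u) w = c * symForm u w := by
  simp only [symForm, Prod.smul_fst, Prod.smul_snd, Pi.smul_apply, smul_eq_mul, Finset.mul_sum]
  exact Finset.sum_congr rfl fun j _ => by ring

lemma symForm_add_left (u u' w : Phase n) : symForm (u + u') w = symForm u w + symForm u' w := by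
  simp only [symForm, Prod.fst_add, Prod.snd_add, Pi.add_apply]
  rw [← Finset.sum_add_distrib]
  exact Finset.sum_congr rfl fun j _ => by ring

lemma symForm_sub_left (u u' w : Phase n) : symForm (u - u') w = symForm u w - symForm u' w := by
  simp only [symForm, Prod.fst_sub, Prod.snd_sub, Pi.sub_apply]
  rw [← Finset.sum_sub_distrib]
  exact Finset.sum_congr rfl fun j _ => by ring

lemma symForm_smul_right (u : Phase n) (c : ℝ) (w : Phase n) :
    symForm u (c • w) = c * symForm u w := by
  simp only [symForm, Prod.smul_fst, Prod.smul_snd, Pi.smul_apply, smul_eq_mul, Finset.mul_sum]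
  exact Finset.sum_congr rfl fun j _ => by ring

/-- symForm (·, w) as a continuous linear map. -/
noncomputable def symCLM (w : Phase n) : Phase n →L[ℝ] ℝ :=
  ∑ j, (w.2 j • ((ContinuousLinearMap.proj j).comp
        (ContinuousLinearMap.fst ℝ (Fin n → ℝ) (Fin n → ℝ)))
      - w.1 j • ((ContinuousLinearMap.proj j).comp
        (ContinuousLinearMap.snd ℝ (Fin n → ℝ) (Fin n → ℝ))))

lemma symCLM_apply (w u : Phase n) : symCLM w u = symForm u w := by
  simp only [symCLM, symForm, ContinuousLinearMap.sum_apply, ContinuousLinearMap.sub_apply,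
    ContinuousLinearMap.smul_apply, ContinuousLinearMap.comp_apply,
    ContinuousLinearMap.coe_fst', ContinuousLinearMap.coe_snd', ContinuousLinearMap.proj_apply,
    smul_eq_mul]
  exact Finset.sum_congr rfl fun j _ => by ring

lemma symForm_integral (F : ℝ → Phase n) (hF : Continuous F) (w : Phase n) :
    symForm (∫ τ in (0:ℝ)..1, F τ) w = ∫ τ in (0:ℝ)..1, symForm (F τ) w := by
  rw [← symCLM_apply, ← ContinuousLinearMap.intervalIntegral_comp_comm _
    (hF.intervalIntegrable 0 1)]
  simp_rw [symCLM_apply]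

lemma symForm_continuous {X : Type*} [TopologicalSpace X] {u w : X → Phase n}
    (hu : Continuous u) (hw : Continuous w) : Continuous (fun x => symForm (u x) (w x)) := by
  unfold symForm
  apply continuous_finset_sum
  intro j _
  fun_prop

lemma fderiv_eq_symForm (G : Phase n → ℝ) (x : Phase n) (w : Phase n) :
    fderiv ℝ G x w = symForm (hamVF G x) w := by
  have hw : w = ∑ j, (w.1 j • ((Pi.single j 1 : Fin n → ℝ), (0 : Fin n → ℝ))
      + w.2 j • ((0 : Fin n → ℝ), (Pi.single j 1 : Fin n → ℝ))) := by
    refine Prod.ext ?_ ?_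
    · simp only [Prod.fst_sum, Prod.fst_add, Prod.smul_fst, smul_zero, add_zero]
      exact (sum_smul_single w.1).symm
    · simp only [Prod.snd_sum, Prod.snd_add, Prod.smul_snd, smul_zero, zero_add]
      exact (sum_smul_single w.2).symm
  have key : symForm (hamVF G x) w
      = fderiv ℝ G x (∑ j, (w.1 j • ((Pi.single j 1 : Fin n → ℝ), (0 : Fin n → ℝ))
        + w.2 j • ((0 : Fin n → ℝ), (Pi.single j 1 : Fin n → ℝ)))) := by
    rw [map_sum]
    simp only [symForm, hamVF, map_add, _root_.map_smul, smul_eq_mul]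
    exact Finset.sum_congr rfl fun j _ => by ring
  rw [key, ← hw]

/-- The inclusion `x ↦ (0,0,x)` as a CLM. -/
noncomputable def inPhase (n : ℕ) : Phase n →L[ℝ] ℝ × ℝ × Phase n :=
  (0 : Phase n →L[ℝ] ℝ).prod ((0 : Phase n →L[ℝ] ℝ).prod (ContinuousLinearMap.id ℝ (Phase n)))

lemma uc3_hasFDerivAt (F : ℝ → ℝ → Phase n → ℝ)
    (hF : ContDiff ℝ (⊤ : ℕ∞) (fun z : ℝ × ℝ × Phase n => F z.1 z.2.1 z.2.2)) (t τ : ℝ) (x : Phase n) :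
    HasFDerivAt (F t τ)
      ((fderiv ℝ (fun z : ℝ × ℝ × Phase n => F z.1 z.2.1 z.2.2) (t, τ, x)).comp (inPhase n)) x := by
  have hι : HasFDerivAt (fun y : Phase n => ((t, τ, y) : ℝ × ℝ × Phase n)) (inPhase n) x :=
    HasFDerivAt.prodMk (hasFDerivAt_const t x) (HasFDerivAt.prodMk (hasFDerivAt_const τ x) (hasFDerivAt_id x))
  exact ((hF.differentiable (by simp) (t, τ, x)).hasFDerivAt).comp x hι

lemma uc3_fderiv_apply (F : ℝ → ℝ → Phase n → ℝ)
    (hF : ContDiff ℝ (⊤ : ℕ∞) (fun z : ℝ × ℝ × Phase n => F z.1 z.2.1 z.2.2)) (t τ : ℝ) (x w : Phase n) :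
    fderiv ℝ (F t τ) x w
      = fderiv ℝ (fun z : ℝ × ℝ × Phase n => F z.1 z.2.1 z.2.2) (t, τ, x) (0, 0, w) := by
  rw [(uc3_hasFDerivAt F hF t τ x).fderiv]
  rfl

lemma pder_cont (F : ℝ → ℝ → Phase n → ℝ)
    (hF : ContDiff ℝ (⊤ : ℕ∞) (fun z : ℝ × ℝ × Phase n => F z.1 z.2.1 z.2.2))
    {X : Type*} [TopologicalSpace X] {a b : X → ℝ} {c d : X → Phase n}
    (ha : Continuous a) (hb : Continuous b) (hc : Continuous c) (hd : Continuous d) :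
    Continuous (fun x => fderiv ℝ (F (a x) (b x)) (c x) (d x)) := by
  simp_rw [uc3_fderiv_apply F hF]
  exact Continuous.clm_apply
    ((hF.continuous_fderiv (by simp)).comp (ha.prodMk (hb.prodMk hc)))
    (continuous_const.prodMk (continuous_const.prodMk hd))

lemma hamVF_cont (F : ℝ → ℝ → Phase n → ℝ)
    (hF : ContDiff ℝ (⊤ : ℕ∞) (fun z : ℝ × ℝ × Phase n => F z.1 z.2.1 z.2.2))
    {X : Type*} [TopologicalSpace X] {a b : X → ℝ} {c : X → Phase n}
    (ha : Continuous a) (hb : Continuous b) (hc : Continuous c) :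
    Continuous (fun x => hamVF (F (a x) (b x)) (c x)) := by
  unfold hamVF
  refine Continuous.prodMk ?_ ?_
  · refine continuous_pi fun i => ?_
    exact pder_cont F hF ha hb hc continuous_const
  · refine continuous_pi fun i => ?_
    exact (pder_cont F hF ha hb hc continuous_const).neg

lemma uc3_comp_hasDerivAt (F : ℝ → ℝ → Phase n → ℝ)
    (hF : ContDiff ℝ (⊤ : ℕ∞) (fun z : ℝ × ℝ × Phase n => F z.1 z.2.1 z.2.2)) (t τ : ℝ)
    {γ : ℝ → Phase n} {γ' : Phase n} {s : ℝ} (hγ : HasDerivAt γ γ' s) :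
    HasDerivAt (fun u => F t τ (γ u)) (fderiv ℝ (F t τ) (γ s) γ') s := by
  have h1 := (uc3_hasFDerivAt F hF t τ (γ s)).comp_hasDerivAt s hγ
  have h2 : ((fderiv ℝ (fun z : ℝ × ℝ × Phase n => F z.1 z.2.1 z.2.2) (t, τ, γ s)).comp
      (inPhase n)) γ' = fderiv ℝ (F t τ) (γ s) γ' := by
    rw [(uc3_hasFDerivAt F hF t τ (γ s)).fderiv]
  rw [← h2]
  exact h1

end AuxLemmas

theorem stmt13 {n : ℕ} (hn : 1 ≤ n)
    (H K : ℝ → ℝ → Phase n → ℝ)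
    (hH : ContDiff ℝ (⊤ : ℕ∞) (fun z : ℝ × ℝ × Phase n => H z.1 z.2.1 z.2.2))
    (hK : ContDiff ℝ (⊤ : ℕ∞) (fun z : ℝ × ℝ × Phase n => K z.1 z.2.1 z.2.2))
    (hHt : ∀ t τ x, H (t + 1) τ x = H t τ x) (hHτ : ∀ t τ x, H t (τ + 1) x = H t τ x)
    (hKt : ∀ t τ x, K (t + 1) τ x = K t τ x) (hKτ : ∀ t τ x, K t (τ + 1) x = K t τ x)
    (v : ℝ → Phase n) (hv : IsLoop v)
    (hcrit : IsCritPt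
      (fun w => (∫ t in (0:ℝ)..1, ∑ j, (w t).2 j * (deriv w t).1 j)
        - ∫ t in (0:ℝ)..1, ∫ τ in (0:ℝ)..1, H t τ (w t) * K t τ (w (t - τ))) v) :
    ∀ t : ℝ,
      deriv v t
        = ∫ τ in (0:ℝ)..1,
            (H (t + τ) τ (v (t + τ)) • hamVF (K (t + τ) τ) (v t)
              + K t τ (v (t - τ)) • hamVF (H t τ) (v t)) := by
  classical
  have hvC : Continuous v := hv.1.continuous
  have hv' : ∀ t, HasDerivAt v (deriv v t) t := fun t => ((hv.1.differentiable (by simp)) t).hasDerivAt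
  have hdvC : Continuous (deriv v) :=
    ((contDiff_infty_iff_deriv.mp (hv.1.of_le (by simp))).2).continuous
  have hpv : ∀ t, v (t + 1) = v t := hv.2
  have hpdv : ∀ t, deriv v (t + 1) = deriv v t := by
    intro t
    have hfun : (fun u => v (u + 1)) = v := funext hpv
    calc deriv v (t + 1) = deriv (fun u => v (u + 1)) t := (deriv_comp_add_const v 1 t).symm
      _ = deriv v t := by rw [hfun]
  have hHc : Continuous (fun z : ℝ × ℝ × Phase n => H z.1 z.2.1 z.2.2) := hH.continuous
  have hKc : Continuous (fun z : ℝ × ℝ × Phase n => K z.1 z.2.1 z.2.2) := hK.continuous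
  -- the putative vector field
  set W : ℝ → Phase n := fun t => ∫ τ in (0:ℝ)..1,
      (H (t + τ) τ (v (t + τ)) • hamVF (K (t + τ) τ) (v t)
        + K t τ (v (t - τ)) • hamVF (H t τ) (v t)) with hW
  have hWint_cont : Continuous (fun p : ℝ × ℝ =>
      H (p.1 + p.2) p.2 (v (p.1 + p.2)) • hamVF (K (p.1 + p.2) p.2) (v p.1)
        + K p.1 p.2 (v (p.1 - p.2)) • hamVF (H p.1 p.2) (v p.1)) := by
    apply Continuous.add
    · apply Continuous.fun_smul
      · exact hHc.comp (show Continuous fun p : ℝ × ℝ =>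
          ((p.1 + p.2, p.2, v (p.1 + p.2)) : ℝ × ℝ × Phase n) by fun_prop)
      · exact hamVF_cont K hK (by fun_prop) (by fun_prop) (by fun_prop)
    · apply Continuous.fun_smul
      · exact hKc.comp (show Continuous fun p : ℝ × ℝ =>
          ((p.1, p.2, v (p.1 - p.2)) : ℝ × ℝ × Phase n) by fun_prop)
      · exact hamVF_cont H hH (by fun_prop) (by fun_prop) (by fun_prop)
  have hWcont : Continuous W := by
    rw [hW]
    exact intervalIntegral.continuous_parametric_intervalIntegral_of_continuous'
      (f := fun t τ => H (t + τ) τ (v (t + τ)) • hamVF (K (t + τ) τ) (v t)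
        + K t τ (v (t - τ)) • hamVF (H t τ) (v t)) hWint_cont 0 1
  have hpW : ∀ t, W (t + 1) = W t := by
    intro t
    rw [hW]
    apply intervalIntegral.integral_congr
    intro τ _
    have e1 : t + 1 + τ = (t + τ) + 1 := by ring
    have e2 : t + 1 - τ = (t - τ) + 1 := by ring
    have eH1 : H (t + τ + 1) τ = H (t + τ) τ := funext fun x => hHt (t + τ) τ x
    have eH0 : H (t + 1) τ = H t τ := funext fun x => hHt t τ x
    have eK1 : K (t + τ + 1) τ = K (t + τ) τ := funext fun x => hKt (t + τ) τ x
    have eK0 : K (t + 1) τ = K t τ := funext fun x => hKt t τ x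
    simp only [e1, e2, eH1, eH0, eK1, eK0, hpv]
  -- MAIN VARIATIONAL IDENTITY
  have main : ∀ vh : ℝ → Phase n, IsLoop vh →
      (∫ t in (0:ℝ)..1, symForm (deriv v t - W t) (vh t)) = 0 := by
    intro vh hvh
    have hvhC : Continuous vh := hvh.1.continuous
    have hvh' : ∀ t, HasDerivAt vh (deriv vh t) t :=
      fun t => ((hvh.1.differentiable (by simp)) t).hasDerivAt
    have hdvhC : Continuous (deriv vh) :=
      ((contDiff_infty_iff_deriv.mp (hvh.1.of_le (by simp))).2).continuous
    have hpvh : ∀ t, vh (t + 1) = vh t := hvh.2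
    have hw' : ∀ s t, HasDerivAt (fun u => v u + s • vh u) (deriv v t + s • deriv vh t) t :=
      fun s t => (hv' t).add (HasDerivAt.const_smul (R := ℝ) s (hvh' t))
    -- kinetic part
    have hF₁c : Continuous (Function.uncurry (fun s t : ℝ =>
        ∑ j, ((v t).2 j + s * (vh t).2 j) * ((deriv v t).1 j + s * (deriv vh t).1 j))) := by
      apply continuous_finset_sum
      intro j _
      fun_prop
    have hF₁'c : Continuous (Function.uncurry (fun s t : ℝ =>
        ∑ j, ((vh t).2 j * ((deriv v t).1 j + s * (deriv vh t).1 j)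
          + ((v t).2 j + s * (vh t).2 j) * (deriv vh t).1 j))) := by
      apply continuous_finset_sum
      intro j _
      fun_prop
    have hd₁ : ∀ s t, HasDerivAt (fun u =>
        ∑ j, ((v t).2 j + u * (vh t).2 j) * ((deriv v t).1 j + u * (deriv vh t).1 j))
        (∑ j, ((vh t).2 j * ((deriv v t).1 j + s * (deriv vh t).1 j)
          + ((v t).2 j + s * (vh t).2 j) * (deriv vh t).1 j)) s := by
      intro s t
      apply HasDerivAt.fun_sum
      intro j _
      have h1 : HasDerivAt (fun u : ℝ => (v t).2 j + u * (vh t).2 j) ((vh t).2 j) s := by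
        simpa using ((hasDerivAt_id s).mul_const ((vh t).2 j)).const_add ((v t).2 j)
      have h2 : HasDerivAt (fun u : ℝ => (deriv v t).1 j + u * (deriv vh t).1 j)
          ((deriv vh t).1 j) s := by
        simpa using ((hasDerivAt_id s).mul_const ((deriv vh t).1 j)).const_add ((deriv v t).1 j)
      simpa using h1.fun_mul h2
    have hT := hasDerivAt_param _ _ hF₁c hF₁'c hd₁ 0
    -- potential part
    have hcurve : ∀ (a : ℝ) (s : ℝ), HasDerivAt (fun u : ℝ => v a + u • vh a) (vh a) s :=
      fun a s => by simpa using ((hasDerivAt_id s).smul_const (vh a)).const_add (v a)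
    have hh2c : Continuous (fun p : ℝ × ℝ × ℝ =>
        H p.2.1 p.2.2 (v p.2.1 + p.1 • vh p.2.1)
          * K p.2.1 p.2.2 (v (p.2.1 - p.2.2) + p.1 • vh (p.2.1 - p.2.2))) := by
      apply Continuous.mul
      · exact hHc.comp (show Continuous fun p : ℝ × ℝ × ℝ =>
          ((p.2.1, p.2.2, v p.2.1 + p.1 • vh p.2.1) : ℝ × ℝ × Phase n) by fun_prop)
      · exact hKc.comp (show Continuous fun p : ℝ × ℝ × ℝ =>
          ((p.2.1, p.2.2, v (p.2.1 - p.2.2) + p.1 • vh (p.2.1 - p.2.2)) : ℝ × ℝ × Phase n)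
          by fun_prop)
    have hΦc : Continuous (fun p : ℝ × ℝ × ℝ =>
        fderiv ℝ (H p.2.1 p.2.2) (v p.2.1 + p.1 • vh p.2.1) (vh p.2.1)
            * K p.2.1 p.2.2 (v (p.2.1 - p.2.2) + p.1 • vh (p.2.1 - p.2.2))
          + H p.2.1 p.2.2 (v p.2.1 + p.1 • vh p.2.1)
            * fderiv ℝ (K p.2.1 p.2.2) (v (p.2.1 - p.2.2) + p.1 • vh (p.2.1 - p.2.2))
              (vh (p.2.1 - p.2.2))) := by
      apply Continuous.add
      · exact (pder_cont H hH (by fun_prop) (by fun_prop) (by fun_prop) (by fun_prop)).mul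
          (hKc.comp (show Continuous fun p : ℝ × ℝ × ℝ =>
            ((p.2.1, p.2.2, v (p.2.1 - p.2.2) + p.1 • vh (p.2.1 - p.2.2)) : ℝ × ℝ × Phase n)
            by fun_prop))
      · exact (hHc.comp (show Continuous fun p : ℝ × ℝ × ℝ =>
            ((p.2.1, p.2.2, v p.2.1 + p.1 • vh p.2.1) : ℝ × ℝ × Phase n) by fun_prop)).mul
          (pder_cont K hK (by fun_prop) (by fun_prop) (by fun_prop) (by fun_prop))
    have hd₂ : ∀ s t τ, HasDerivAt (fun u : ℝ =>
        H t τ (v t + u • vh t) * K t τ (v (t - τ) + u • vh (t - τ)))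
        (fderiv ℝ (H t τ) (v t + s • vh t) (vh t) * K t τ (v (t - τ) + s • vh (t - τ))
          + H t τ (v t + s • vh t)
            * fderiv ℝ (K t τ) (v (t - τ) + s • vh (t - τ)) (vh (t - τ))) s := by
      intro s t τ
      exact (uc3_comp_hasDerivAt H hH t τ (hcurve t s)).mul
        (uc3_comp_hasDerivAt K hK t τ (hcurve (t - τ) s))
    have hGc : Continuous (Function.uncurry (fun s t : ℝ => ∫ τ in (0:ℝ)..1,
        H t τ (v t + s • vh t) * K t τ (v (t - τ) + s • vh (t - τ)))) := by
      apply intervalIntegral.continuous_parametric_intervalIntegral_of_continuous'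
        (f := fun p : ℝ × ℝ => fun τ => H p.2 τ (v p.2 + p.1 • vh p.2)
          * K p.2 τ (v (p.2 - τ) + p.1 • vh (p.2 - τ)))
      exact hh2c.comp (show Continuous fun q : (ℝ × ℝ) × ℝ => ((q.1.1, q.1.2, q.2) : ℝ × ℝ × ℝ)
        by fun_prop)
    have hG'c : Continuous (Function.uncurry (fun s t : ℝ => ∫ τ in (0:ℝ)..1,
        (fderiv ℝ (H t τ) (v t + s • vh t) (vh t) * K t τ (v (t - τ) + s • vh (t - τ))
          + H t τ (v t + s • vh t)
            * fderiv ℝ (K t τ) (v (t - τ) + s • vh (t - τ)) (vh (t - τ))))) := by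
      apply intervalIntegral.continuous_parametric_intervalIntegral_of_continuous'
        (f := fun p : ℝ × ℝ => fun τ =>
          fderiv ℝ (H p.2 τ) (v p.2 + p.1 • vh p.2) (vh p.2)
              * K p.2 τ (v (p.2 - τ) + p.1 • vh (p.2 - τ))
            + H p.2 τ (v p.2 + p.1 • vh p.2)
              * fderiv ℝ (K p.2 τ) (v (p.2 - τ) + p.1 • vh (p.2 - τ)) (vh (p.2 - τ)))
      exact hΦc.comp (show Continuous fun q : (ℝ × ℝ) × ℝ => ((q.1.1, q.1.2, q.2) : ℝ × ℝ × ℝ)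
        by fun_prop)
    have hdG : ∀ s t, HasDerivAt (fun u : ℝ => ∫ τ in (0:ℝ)..1,
        H t τ (v t + u • vh t) * K t τ (v (t - τ) + u • vh (t - τ)))
        (∫ τ in (0:ℝ)..1,
          (fderiv ℝ (H t τ) (v t + s • vh t) (vh t) * K t τ (v (t - τ) + s • vh (t - τ))
            + H t τ (v t + s • vh t)
              * fderiv ℝ (K t τ) (v (t - τ) + s • vh (t - τ)) (vh (t - τ)))) s := by
      intro s t
      refine hasDerivAt_param _ _ ?_ ?_ (fun u τ => hd₂ u t τ) s
      · exact hh2c.comp (show Continuous fun q : ℝ × ℝ => ((q.1, t, q.2) : ℝ × ℝ × ℝ) by fun_prop)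
      · exact hΦc.comp (show Continuous fun q : ℝ × ℝ => ((q.1, t, q.2) : ℝ × ℝ × ℝ) by fun_prop)
    have hU := hasDerivAt_param _ _ hGc hG'c hdG 0
    -- identify the action along the deformation
    have hcv := hcrit vh hvh
    unfold firstVariation at hcv
    have hAeq : (fun s : ℝ =>
        (∫ t in (0:ℝ)..1, ∑ j, ((fun t => v t + s • vh t) t).2 j
            * (deriv (fun t => v t + s • vh t) t).1 j)
          - ∫ t in (0:ℝ)..1, ∫ τ in (0:ℝ)..1,
              H t τ ((fun t => v t + s • vh t) t) * K t τ ((fun t => v t + s • vh t) (t - τ)))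
        = fun s : ℝ =>
        (∫ t in (0:ℝ)..1,
          ∑ j, ((v t).2 j + s * (vh t).2 j) * ((deriv v t).1 j + s * (deriv vh t).1 j))
          - ∫ t in (0:ℝ)..1, ∫ τ in (0:ℝ)..1,
              H t τ (v t + s • vh t) * K t τ (v (t - τ) + s • vh (t - τ)) := by
      funext s
      congr 1
      apply intervalIntegral.integral_congr
      intro t _
      dsimp only
      rw [(hw' s t).deriv]
      refine Finset.sum_congr rfl fun j _ => ?_
      simp [Prod.fst_add, Prod.snd_add, Pi.add_apply, Prod.smul_fst, Prod.smul_snd,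
        Pi.smul_apply, smul_eq_mul]
    rw [hAeq] at hcv
    rw [(hT.fun_sub hU).deriv] at hcv
    rw [sub_eq_zero] at hcv
    -- clean up the value at s = 0
    have hL : (∫ t in (0:ℝ)..1,
        ∑ j, ((vh t).2 j * ((deriv v t).1 j + 0 * (deriv vh t).1 j)
          + ((v t).2 j + 0 * (vh t).2 j) * (deriv vh t).1 j))
        = ∫ t in (0:ℝ)..1,
          (∑ j, ((vh t).2 j * (deriv v t).1 j + (v t).2 j * (deriv vh t).1 j)) := by
      apply intervalIntegral.integral_congr
      intro t _
      refine Finset.sum_congr rfl fun j _ => by ring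
    have hR : (∫ t in (0:ℝ)..1, ∫ τ in (0:ℝ)..1,
        (fderiv ℝ (H t τ) (v t + (0:ℝ) • vh t) (vh t)
            * K t τ (v (t - τ) + (0:ℝ) • vh (t - τ))
          + H t τ (v t + (0:ℝ) • vh t)
            * fderiv ℝ (K t τ) (v (t - τ) + (0:ℝ) • vh (t - τ)) (vh (t - τ))))
        = ∫ t in (0:ℝ)..1, ∫ τ in (0:ℝ)..1,
          (fderiv ℝ (H t τ) (v t) (vh t) * K t τ (v (t - τ))
            + H t τ (v t) * fderiv ℝ (K t τ) (v (t - τ)) (vh (t - τ))) := by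
      apply intervalIntegral.integral_congr
      intro t _
      apply intervalIntegral.integral_congr
      intro τ _
      simp
    rw [hL, hR] at hcv
    -- continuity of the pieces
    have hB1c : Continuous (fun p : ℝ × ℝ =>
        fderiv ℝ (H p.1 p.2) (v p.1) (vh p.1) * K p.1 p.2 (v (p.1 - p.2))) :=
      (pder_cont H hH (by fun_prop) (by fun_prop) (by fun_prop) (by fun_prop)).mul
        (hKc.comp (show Continuous fun p : ℝ × ℝ =>
          ((p.1, p.2, v (p.1 - p.2)) : ℝ × ℝ × Phase n) by fun_prop))
    have hB2c : Continuous (fun p : ℝ × ℝ =>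
        H p.1 p.2 (v p.1) * fderiv ℝ (K p.1 p.2) (v (p.1 - p.2)) (vh (p.1 - p.2))) :=
      (hHc.comp (show Continuous fun p : ℝ × ℝ =>
          ((p.1, p.2, v p.1) : ℝ × ℝ × Phase n) by fun_prop)).mul
        (pder_cont K hK (by fun_prop) (by fun_prop) (by fun_prop) (by fun_prop))
    have hB2'c : Continuous (fun p : ℝ × ℝ =>
        H (p.1 + p.2) p.2 (v (p.1 + p.2)) * fderiv ℝ (K (p.1 + p.2) p.2) (v p.1) (vh p.1)) :=
      (hHc.comp (show Continuous fun p : ℝ × ℝ =>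
          ((p.1 + p.2, p.2, v (p.1 + p.2)) : ℝ × ℝ × Phase n) by fun_prop)).mul
        (pder_cont K hK (by fun_prop) (by fun_prop) (by fun_prop) (by fun_prop))
    -- integration by parts
    have hibp : (∫ t in (0:ℝ)..1,
        ∑ j, ((vh t).2 j * (deriv v t).1 j + (v t).2 j * (deriv vh t).1 j))
        = ∫ t in (0:ℝ)..1, symForm (deriv v t) (vh t) := by
      have hphi : ∀ t, HasDerivAt (fun u => ∑ j, (v u).2 j * (vh u).1 j)
          (∑ j, ((deriv v t).2 j * (vh t).1 j + (v t).2 j * (deriv vh t).1 j)) t := by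
        intro t
        apply HasDerivAt.fun_sum
        intro j _
        have hv2 : HasDerivAt (fun u => (v u).2 j) ((deriv v t).2 j) t := by
          have hc := (((ContinuousLinearMap.proj j : (Fin n → ℝ) →L[ℝ] ℝ)).comp
            (ContinuousLinearMap.snd ℝ (Fin n → ℝ) (Fin n → ℝ))).hasFDerivAt.comp_hasDerivAt
            t (hv' t)
          exact hc
        have hvh1 : HasDerivAt (fun u => (vh u).1 j) ((deriv vh t).1 j) t := by
          have hc := (((ContinuousLinearMap.proj j : (Fin n → ℝ) →L[ℝ] ℝ)).comp
            (ContinuousLinearMap.fst ℝ (Fin n → ℝ) (Fin n → ℝ))).hasFDerivAt.comp_hasDerivAt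
            t (hvh' t)
          exact hc
        exact hv2.fun_mul hvh1
      have hftc : (∫ t in (0:ℝ)..1,
          ∑ j, ((deriv v t).2 j * (vh t).1 j + (v t).2 j * (deriv vh t).1 j)) = 0 := by
        rw [intervalIntegral.integral_eq_sub_of_hasDerivAt (fun t _ => hphi t)
          (Continuous.intervalIntegrable (by
            apply continuous_finset_sum
            intro j _
            fun_prop) 0 1)]
        have h1 : v 1 = v 0 := by have := hpv 0; rwa [zero_add] at this
        have h2 : vh 1 = vh 0 := by have := hpvh 0; rwa [zero_add] at this
        rw [h1, h2, sub_self]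
      have hpt : ∀ t, (∑ j, ((vh t).2 j * (deriv v t).1 j + (v t).2 j * (deriv vh t).1 j))
          = symForm (deriv v t) (vh t)
            + ∑ j, ((deriv v t).2 j * (vh t).1 j + (v t).2 j * (deriv vh t).1 j) := by
        intro t
        unfold symForm
        rw [← Finset.sum_add_distrib]
        exact Finset.sum_congr rfl fun j _ => by ring
      calc (∫ t in (0:ℝ)..1,
            ∑ j, ((vh t).2 j * (deriv v t).1 j + (v t).2 j * (deriv vh t).1 j))
          = ∫ t in (0:ℝ)..1, (symForm (deriv v t) (vh t)
            + ∑ j, ((deriv v t).2 j * (vh t).1 j + (v t).2 j * (deriv vh t).1 j)) :=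
            intervalIntegral.integral_congr fun t _ => hpt t
        _ = (∫ t in (0:ℝ)..1, symForm (deriv v t) (vh t))
            + ∫ t in (0:ℝ)..1,
              ∑ j, ((deriv v t).2 j * (vh t).1 j + (v t).2 j * (deriv vh t).1 j) :=
            intervalIntegral.integral_add
              (Continuous.intervalIntegrable (symForm_continuous hdvC hvhC) 0 1)
              (Continuous.intervalIntegrable (by
                apply continuous_finset_sum
                intro j _
                fun_prop) 0 1)
        _ = ∫ t in (0:ℝ)..1, symForm (deriv v t) (vh t) := by rw [hftc, add_zero]
    -- change of variables in the second potential term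
    have hshift : ∀ τ : ℝ, (∫ t in (0:ℝ)..1,
        H t τ (v t) * fderiv ℝ (K t τ) (v (t - τ)) (vh (t - τ)))
        = ∫ t in (0:ℝ)..1, H (t + τ) τ (v (t + τ)) * fderiv ℝ (K (t + τ) τ) (v t) (vh t) := by
      intro τ
      have hper : Function.Periodic
          (fun t => H t τ (v t) * fderiv ℝ (K t τ) (v (t - τ)) (vh (t - τ))) 1 := by
        intro t
        have eH0 : H (t + 1) τ = H t τ := funext fun x => hHt t τ x
        have eK0 : K (t + 1) τ = K t τ := funext fun x => hKt t τ x
        have e2 : t + 1 - τ = (t - τ) + 1 := by ring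
        simp only [e2, eH0, eK0, hpv, hpvh]
      calc (∫ t in (0:ℝ)..1, H t τ (v t) * fderiv ℝ (K t τ) (v (t - τ)) (vh (t - τ)))
          = ∫ t in τ..(τ + 1), H t τ (v t) * fderiv ℝ (K t τ) (v (t - τ)) (vh (t - τ)) := by
            have h0 := hper.intervalIntegral_add_eq τ 0
            rw [zero_add] at h0
            exact h0.symm
        _ = ∫ t in (0 + τ)..(1 + τ),
            H t τ (v t) * fderiv ℝ (K t τ) (v (t - τ)) (vh (t - τ)) := by
            rw [show (0:ℝ) + τ = τ by ring, show (1:ℝ) + τ = τ + 1 by ring]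
        _ = ∫ t in (0:ℝ)..1,
            H (t + τ) τ (v (t + τ)) * fderiv ℝ (K (t + τ) τ) (v (t + τ - τ)) (vh (t + τ - τ)) :=
            (intervalIntegral.integral_comp_add_right
              (fun t => H t τ (v t) * fderiv ℝ (K t τ) (v (t - τ)) (vh (t - τ))) τ).symm
        _ = ∫ t in (0:ℝ)..1,
            H (t + τ) τ (v (t + τ)) * fderiv ℝ (K (t + τ) τ) (v t) (vh t) :=
            intervalIntegral.integral_congr fun t _ => by rw [add_sub_cancel_right]
    have hB2shift : (∫ t in (0:ℝ)..1, ∫ τ in (0:ℝ)..1,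
        H t τ (v t) * fderiv ℝ (K t τ) (v (t - τ)) (vh (t - τ)))
        = ∫ t in (0:ℝ)..1, ∫ τ in (0:ℝ)..1,
          H (t + τ) τ (v (t + τ)) * fderiv ℝ (K (t + τ) τ) (v t) (vh t) := by
      rw [fubini_box (f := fun t τ => H t τ (v t) * fderiv ℝ (K t τ) (v (t - τ)) (vh (t - τ)))
        hB2c]
      rw [intervalIntegral.integral_congr (g := fun τ => ∫ t in (0:ℝ)..1,
        H (t + τ) τ (v (t + τ)) * fderiv ℝ (K (t + τ) τ) (v t) (vh t)) fun τ _ => hshift τ]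
      exact (fubini_box (f := fun t τ =>
        H (t + τ) τ (v (t + τ)) * fderiv ℝ (K (t + τ) τ) (v t) (vh t)) hB2'c).symm
    -- continuity of the inner integrals as functions of t
    have hIB1c : Continuous (fun t => ∫ τ in (0:ℝ)..1,
        fderiv ℝ (H t τ) (v t) (vh t) * K t τ (v (t - τ))) :=
      intervalIntegral.continuous_parametric_intervalIntegral_of_continuous'
        (f := fun t τ => fderiv ℝ (H t τ) (v t) (vh t) * K t τ (v (t - τ))) hB1c 0 1
    have hIB2c : Continuous (fun t => ∫ τ in (0:ℝ)..1,
        H t τ (v t) * fderiv ℝ (K t τ) (v (t - τ)) (vh (t - τ))) :=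
      intervalIntegral.continuous_parametric_intervalIntegral_of_continuous'
        (f := fun t τ => H t τ (v t) * fderiv ℝ (K t τ) (v (t - τ)) (vh (t - τ))) hB2c 0 1
    have hIB2'c : Continuous (fun t => ∫ τ in (0:ℝ)..1,
        H (t + τ) τ (v (t + τ)) * fderiv ℝ (K (t + τ) τ) (v t) (vh t)) :=
      intervalIntegral.continuous_parametric_intervalIntegral_of_continuous'
        (f := fun t τ => H (t + τ) τ (v (t + τ)) * fderiv ℝ (K (t + τ) τ) (v t) (vh t)) hB2'c 0 1
    -- assemble the right-hand side into symForm (W t) (vh t)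
    have hRHS : (∫ t in (0:ℝ)..1, ∫ τ in (0:ℝ)..1,
        (fderiv ℝ (H t τ) (v t) (vh t) * K t τ (v (t - τ))
          + H t τ (v t) * fderiv ℝ (K t τ) (v (t - τ)) (vh (t - τ))))
        = ∫ t in (0:ℝ)..1, symForm (W t) (vh t) := by
      have hsplit : ∀ t : ℝ, (∫ τ in (0:ℝ)..1,
          (fderiv ℝ (H t τ) (v t) (vh t) * K t τ (v (t - τ))
            + H t τ (v t) * fderiv ℝ (K t τ) (v (t - τ)) (vh (t - τ))))
          = (∫ τ in (0:ℝ)..1, fderiv ℝ (H t τ) (v t) (vh t) * K t τ (v (t - τ)))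
            + ∫ τ in (0:ℝ)..1, H t τ (v t) * fderiv ℝ (K t τ) (v (t - τ)) (vh (t - τ)) := by
        intro t
        refine intervalIntegral.integral_add ?_ ?_
        · exact Continuous.intervalIntegrable (hB1c.comp (show Continuous fun τ : ℝ =>
            ((t, τ) : ℝ × ℝ) by fun_prop)) 0 1
        · exact Continuous.intervalIntegrable (hB2c.comp (show Continuous fun τ : ℝ =>
            ((t, τ) : ℝ × ℝ) by fun_prop)) 0 1
      have hmerge : ∀ t : ℝ,
          (∫ τ in (0:ℝ)..1, fderiv ℝ (H t τ) (v t) (vh t) * K t τ (v (t - τ)))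
            + (∫ τ in (0:ℝ)..1,
              H (t + τ) τ (v (t + τ)) * fderiv ℝ (K (t + τ) τ) (v t) (vh t))
          = symForm (W t) (vh t) := by
        intro t
        have hfield : Continuous (fun τ : ℝ =>
            H (t + τ) τ (v (t + τ)) • hamVF (K (t + τ) τ) (v t)
              + K t τ (v (t - τ)) • hamVF (H t τ) (v t)) :=
          hWint_cont.comp (show Continuous fun τ : ℝ => ((t, τ) : ℝ × ℝ) by fun_prop)
        have hptw : ∀ τ : ℝ,
            fderiv ℝ (H t τ) (v t) (vh t) * K t τ (v (t - τ))
              + H (t + τ) τ (v (t + τ)) * fderiv ℝ (K (t + τ) τ) (v t) (vh t)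
            = symForm (H (t + τ) τ (v (t + τ)) • hamVF (K (t + τ) τ) (v t)
                + K t τ (v (t - τ)) • hamVF (H t τ) (v t)) (vh t) := by
          intro τ
          rw [symForm_add_left, symForm_smul_left, symForm_smul_left,
            fderiv_eq_symForm (H t τ) (v t) (vh t),
            fderiv_eq_symForm (K (t + τ) τ) (v t) (vh t)]
          ring
        calc (∫ τ in (0:ℝ)..1, fderiv ℝ (H t τ) (v t) (vh t) * K t τ (v (t - τ)))
              + (∫ τ in (0:ℝ)..1,
                H (t + τ) τ (v (t + τ)) * fderiv ℝ (K (t + τ) τ) (v t) (vh t))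
            = ∫ τ in (0:ℝ)..1,
              (fderiv ℝ (H t τ) (v t) (vh t) * K t τ (v (t - τ))
                + H (t + τ) τ (v (t + τ)) * fderiv ℝ (K (t + τ) τ) (v t) (vh t)) :=
              (intervalIntegral.integral_add
                (Continuous.intervalIntegrable (hB1c.comp (show Continuous fun τ : ℝ =>
                  ((t, τ) : ℝ × ℝ) by fun_prop)) 0 1)
                (Continuous.intervalIntegrable (hB2'c.comp (show Continuous fun τ : ℝ =>
                  ((t, τ) : ℝ × ℝ) by fun_prop)) 0 1)).symm
          _ = ∫ τ in (0:ℝ)..1,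
              symForm (H (t + τ) τ (v (t + τ)) • hamVF (K (t + τ) τ) (v t)
                + K t τ (v (t - τ)) • hamVF (H t τ) (v t)) (vh t) :=
              intervalIntegral.integral_congr fun τ _ => hptw τ
          _ = symForm (W t) (vh t) := by
              rw [← symForm_integral _ hfield (vh t)]
      calc (∫ t in (0:ℝ)..1, ∫ τ in (0:ℝ)..1,
            (fderiv ℝ (H t τ) (v t) (vh t) * K t τ (v (t - τ))
              + H t τ (v t) * fderiv ℝ (K t τ) (v (t - τ)) (vh (t - τ))))
          = ∫ t in (0:ℝ)..1,
            ((∫ τ in (0:ℝ)..1, fderiv ℝ (H t τ) (v t) (vh t) * K t τ (v (t - τ)))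
              + ∫ τ in (0:ℝ)..1, H t τ (v t) * fderiv ℝ (K t τ) (v (t - τ)) (vh (t - τ))) :=
            intervalIntegral.integral_congr fun t _ => hsplit t
        _ = (∫ t in (0:ℝ)..1, ∫ τ in (0:ℝ)..1,
              fderiv ℝ (H t τ) (v t) (vh t) * K t τ (v (t - τ)))
            + ∫ t in (0:ℝ)..1, ∫ τ in (0:ℝ)..1,
              H t τ (v t) * fderiv ℝ (K t τ) (v (t - τ)) (vh (t - τ)) :=
            intervalIntegral.integral_add
              (Continuous.intervalIntegrable hIB1c 0 1)
              (Continuous.intervalIntegrable hIB2c 0 1)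
        _ = (∫ t in (0:ℝ)..1, ∫ τ in (0:ℝ)..1,
              fderiv ℝ (H t τ) (v t) (vh t) * K t τ (v (t - τ)))
            + ∫ t in (0:ℝ)..1, ∫ τ in (0:ℝ)..1,
              H (t + τ) τ (v (t + τ)) * fderiv ℝ (K (t + τ) τ) (v t) (vh t) := by
            rw [hB2shift]
        _ = ∫ t in (0:ℝ)..1,
            ((∫ τ in (0:ℝ)..1, fderiv ℝ (H t τ) (v t) (vh t) * K t τ (v (t - τ)))
              + ∫ τ in (0:ℝ)..1,
                H (t + τ) τ (v (t + τ)) * fderiv ℝ (K (t + τ) τ) (v t) (vh t)) :=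
            (intervalIntegral.integral_add
              (Continuous.intervalIntegrable hIB1c 0 1)
              (Continuous.intervalIntegrable hIB2'c 0 1)).symm
        _ = ∫ t in (0:ℝ)..1, symForm (W t) (vh t) :=
            intervalIntegral.integral_congr fun t _ => hmerge t
    -- final assembly
    calc (∫ t in (0:ℝ)..1, symForm (deriv v t - W t) (vh t))
        = ∫ t in (0:ℝ)..1, (symForm (deriv v t) (vh t) - symForm (W t) (vh t)) :=
          intervalIntegral.integral_congr fun t _ => symForm_sub_left _ _ _
      _ = (∫ t in (0:ℝ)..1, symForm (deriv v t) (vh t))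
          - ∫ t in (0:ℝ)..1, symForm (W t) (vh t) :=
          intervalIntegral.integral_sub
            (Continuous.intervalIntegrable (symForm_continuous hdvC hvhC) 0 1)
            (Continuous.intervalIntegrable (symForm_continuous hWcont hvhC) 0 1)
      _ = 0 := by rw [← hibp, hcv, hRHS, sub_self]
  -- STEP B: Fourier argument
  have hsym0 : ∀ (c : Phase n) (t : ℝ), symForm (deriv v t - W t) c = 0 := by
    intro c
    have hEc : Continuous fun t => symForm (deriv v t - W t) c :=
      symForm_continuous (hdvC.sub hWcont) continuous_const
    have hEp : ∀ t, symForm (deriv v (t + 1) - W (t + 1)) c = symForm (deriv v t - W t) c :=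
      fun t => by rw [hpdv, hpW]
    refine fourier_vanish _ hEc hEp ?_
    intro k
    constructor
    · have hcosd : ContDiff ℝ (⊤ : ℕ∞) fun t : ℝ => Real.cos (2*π*k*t) := by
        have heq : (fun t : ℝ => Real.cos (2*π*k*t))
            = Real.cos ∘ (fun t : ℝ => (2*π*(k:ℝ))*t) := by
          funext t; simp [Function.comp, mul_assoc]
        rw [heq]
        exact Real.contDiff_cos.comp (contDiff_const.mul contDiff_id)
      have hloop : IsLoop (fun t => Real.cos (2*π*k*t) • c) := by
        refine ⟨hcosd.smul contDiff_const, fun t => ?_⟩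
        dsimp only
        rw [show 2*π*(k:ℝ)*(t+1) = 2*π*k*t + k*(2*π) by ring, Real.cos_add_int_mul_two_pi]
      refine Eq.trans (intervalIntegral.integral_congr
        (g := fun t => symForm (deriv v t - W t) (Real.cos (2*π*k*t) • c))
        fun t _ => (symForm_smul_right _ _ _).symm) (main _ hloop)
    · have hsind : ContDiff ℝ (⊤ : ℕ∞) fun t : ℝ => Real.sin (2*π*k*t) := by
        have heq : (fun t : ℝ => Real.sin (2*π*k*t))
            = Real.sin ∘ (fun t : ℝ => (2*π*(k:ℝ))*t) := by
          funext t; simp [Function.comp, mul_assoc]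
        rw [heq]
        exact Real.contDiff_sin.comp (contDiff_const.mul contDiff_id)
      have hloop : IsLoop (fun t => Real.sin (2*π*k*t) • c) := by
        refine ⟨hsind.smul contDiff_const, fun t => ?_⟩
        dsimp only
        rw [show 2*π*(k:ℝ)*(t+1) = 2*π*k*t + k*(2*π) by ring, Real.sin_add_int_mul_two_pi]
      refine Eq.trans (intervalIntegral.integral_congr
        (g := fun t => symForm (deriv v t - W t) (Real.sin (2*π*k*t) • c))
        fun t _ => (symForm_smul_right _ _ _).symm) (main _ hloop)
  -- conclude pointwise
  intro t
  have hE : deriv v t - W t = 0 := by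
    have h1 := hsym0 ((fun j => -((deriv v t - W t).2 j)), (fun j => (deriv v t - W t).1 j)) t
    have h2 : ∑ j, ((deriv v t - W t).1 j ^ 2 + (deriv v t - W t).2 j ^ 2) = 0 := by
      rw [← h1]
      unfold symForm
      exact Finset.sum_congr rfl fun j _ => by ring
    have hzero : ∀ j, (deriv v t - W t).1 j = 0 ∧ (deriv v t - W t).2 j = 0 := by
      intro j
      have hnn : ∀ i ∈ Finset.univ,
          (0:ℝ) ≤ (deriv v t - W t).1 i ^ 2 + (deriv v t - W t).2 i ^ 2 :=
        fun i _ => by positivity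
      have hj := (Finset.sum_eq_zero_iff_of_nonneg hnn).mp h2 j (Finset.mem_univ j)
      constructor <;> nlinarith [sq_nonneg ((deriv v t - W t).1 j),
        sq_nonneg ((deriv v t - W t).2 j)]
    refine Prod.ext ?_ ?_
    · funext j
      simpa using (hzero j).1
    · funext j
      simpa using (hzero j).2
  have hfin := sub_eq_zero.mp hE
  rw [hfin, hW]
end

section
/- Let H : ℝ^{2n} × ℝ^{2n} → ℝ be smooth, and let τ ∈ ℝ. Define 𝒜(v) = ∫₀¹ [ p(t)·q̇(t) − H(v(t), v(t+τ)) ] dt on loops v = (q,p). Then every critical point v of 𝒜 satisfies v̇(t) = X¹_H(v(t), v(t+τ)) + X²_H(v(t−τ), v(t)) for all t ∈ ℝ, where X¹_H(x,y) is the Hamiltonian vector field at x of the function x' ↦ H(x',y), and X²_H(x,y) is the Hamiltonian vector field at y of the function y' ↦ H(x,y'). -/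
open MeasureTheory intervalIntegral Real

/-! ### Auxiliary lemmas -/

noncomputable section AuxLemmas

open Metric

variable {n : ℕ}

lemma contDiff_deriv_of {v : ℝ → Phase n} (hv : ContDiff ℝ (⊤ : ℕ∞) v) : ContDiff ℝ (⊤ : ℕ∞) (deriv v) := by
  have h : ((⊤ : ℕ∞) : WithTop ℕ∞) + 1 ≤ ((⊤ : ℕ∞) : WithTop ℕ∞) := by exact_mod_cast le_top
  exact (hv.fderiv_right h).clm_apply contDiff_const

lemma hasDerivAt_fst_coord {w : ℝ → Phase n} (hw : Differentiable ℝ w) (j : Fin n) (t : ℝ) :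
    HasDerivAt (fun t => (w t).1 j) ((deriv w t).1 j) t :=
  (((ContinuousLinearMap.proj j).comp
    (ContinuousLinearMap.fst ℝ (Fin n → ℝ) (Fin n → ℝ))).hasFDerivAt.comp_hasDerivAt t
    (hw t).hasDerivAt)

lemma hasDerivAt_snd_coord {w : ℝ → Phase n} (hw : Differentiable ℝ w) (j : Fin n) (t : ℝ) :
    HasDerivAt (fun t => (w t).2 j) ((deriv w t).2 j) t :=
  (((ContinuousLinearMap.proj j).comp
    (ContinuousLinearMap.snd ℝ (Fin n → ℝ) (Fin n → ℝ))).hasFDerivAt.comp_hasDerivAt t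
    (hw t).hasDerivAt)

lemma deriv_periodic {v : ℝ → Phase n} (hper : ∀ t, v (t + 1) = v t) (t : ℝ) :
    deriv v (t + 1) = deriv v t := by
  have h : (fun s => v (s + 1)) = v := funext hper
  rw [← deriv_comp_add_const v 1 t, h]

lemma clm_decomp (L : Phase n →L[ℝ] ℝ) (u : Phase n) :
    L u = ∑ j, u.1 j * L (Pi.single j 1, 0) + ∑ j, u.2 j * L (0, Pi.single j 1) := by
  have h1 : (u.1, (0 : Fin n → ℝ)) = ∑ j, u.1 j • ((Pi.single j 1 : Fin n → ℝ), (0 : Fin n → ℝ)) := by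
    ext i
    · simp [Prod.fst_sum, Finset.sum_apply, Pi.single_apply, mul_ite]
    · simp [Prod.snd_sum]
  have h2 : ((0 : Fin n → ℝ), u.2) = ∑ j, u.2 j • ((0 : Fin n → ℝ), (Pi.single j 1 : Fin n → ℝ)) := by
    ext i
    · simp [Prod.fst_sum]
    · simp [Prod.snd_sum, Finset.sum_apply, Pi.single_apply, mul_ite]
  calc L u = L ((u.1, (0:Fin n → ℝ)) + ((0:Fin n → ℝ), u.2)) := by
        congr 1; ext <;> simp
    _ = L (u.1, (0:Fin n → ℝ)) + L ((0:Fin n → ℝ), u.2) := map_add _ _ _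
    _ = ∑ j, u.1 j * L (Pi.single j 1, 0) + ∑ j, u.2 j * L (0, Pi.single j 1) := by
        rw [h1, h2, map_sum, map_sum]
        refine congrArg₂ (· + ·) (Finset.sum_congr rfl fun j _ => ?_)
          (Finset.sum_congr rfl fun j _ => ?_)
        · rw [_root_.map_smul, smul_eq_mul]
        · rw [_root_.map_smul, smul_eq_mul]

lemma clm_left_decomp (L : Phase n × Phase n →L[ℝ] ℝ) (u : Phase n) :
    L (u, 0) = ∑ j, u.1 j * L ((Pi.single j 1, 0), 0) + ∑ j, u.2 j * L ((0, Pi.single j 1), 0) := by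
  have h := clm_decomp (L.comp (ContinuousLinearMap.inl ℝ (Phase n) (Phase n))) u
  simpa using h

lemma clm_right_decomp (L : Phase n × Phase n →L[ℝ] ℝ) (u : Phase n) :
    L (0, u) = ∑ j, u.1 j * L (0, (Pi.single j 1, 0)) + ∑ j, u.2 j * L (0, (0, Pi.single j 1)) := by
  have h := clm_decomp (L.comp (ContinuousLinearMap.inr ℝ (Phase n) (Phase n))) u
  simpa using h

lemma fderiv_partial_left (H : Phase n × Phase n → ℝ) (hH : ContDiff ℝ (⊤ : ℕ∞) H)
    (x y : Phase n) (u : Phase n) :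
    fderiv ℝ (fun x' => H (x', y)) x u = fderiv ℝ H (x, y) (u, 0) := by
  have h1 : HasFDerivAt (fun x' : Phase n => (x', y))
      (ContinuousLinearMap.inl ℝ (Phase n) (Phase n)) x := hasFDerivAt_prodMk_left x y
  have h2 : HasFDerivAt H (fderiv ℝ H (x, y)) (x, y) :=
    (hH.differentiable (by simp) _).hasFDerivAt
  have h3 : HasFDerivAt (fun x' : Phase n => H (x', y))
      ((fderiv ℝ H (x, y)).comp (ContinuousLinearMap.inl ℝ (Phase n) (Phase n))) x := h2.comp x h1
  rw [h3.fderiv]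
  rfl

lemma fderiv_partial_right (H : Phase n × Phase n → ℝ) (hH : ContDiff ℝ (⊤ : ℕ∞) H)
    (x y : Phase n) (u : Phase n) :
    fderiv ℝ (fun y' => H (x, y')) y u = fderiv ℝ H (x, y) (0, u) := by
  have h1 : HasFDerivAt (fun y' : Phase n => (x, y'))
      (ContinuousLinearMap.inr ℝ (Phase n) (Phase n)) y := hasFDerivAt_prodMk_right x y
  have h2 : HasFDerivAt H (fderiv ℝ H (x, y)) (x, y) :=
    (hH.differentiable (by simp) _).hasFDerivAt
  have h3 : HasFDerivAt (fun y' : Phase n => H (x, y'))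
      ((fderiv ℝ H (x, y)).comp (ContinuousLinearMap.inr ℝ (Phase n) (Phase n))) y := h2.comp y h1
  rw [h3.fderiv]
  rfl

lemma integral_shift {g : ℝ → ℝ} (hper : ∀ t, g (t + 1) = g t) (τ : ℝ) :
    ∫ t in (0:ℝ)..1, g (t + τ) = ∫ t in (0:ℝ)..1, g t := by
  have hP : Function.Periodic g 1 := hper
  have h1 : ∫ t in (0:ℝ)..1, g (t + τ) = ∫ t in (0+τ:ℝ)..(1+τ), g t :=
    intervalIntegral.integral_comp_add_right _ _
  rw [h1]
  have := hP.intervalIntegral_add_eq (0+τ) 0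
  simpa [add_comm, add_left_comm] using this

lemma zero_of_integral_zero {f : ℝ → ℝ} (hf : Continuous f) (hper : ∀ t, f (t + 1) = f t)
    (hnn : ∀ t, 0 ≤ f t) (hint : ∫ t in (0:ℝ)..1, f t = 0) : ∀ t, f t = 0 := by
  intro t₀
  by_contra hne
  have hpos : 0 < f t₀ := lt_of_le_of_ne (hnn t₀) (Ne.symm hne)
  have hP : Function.Periodic f 1 := hper
  set a : ℝ := t₀ - 1/2 with ha
  have hIa : ∫ t in a..(a+1), f t = 0 := by
    rw [hP.intervalIntegral_add_eq a 0]; simpa using hint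
  have hev : ∀ᶠ x in nhds t₀, f t₀ / 2 < f x :=
    (hf.continuousAt (x := t₀)).eventually (eventually_gt_nhds (half_lt_self hpos))
  rcases Metric.eventually_nhds_iff.mp hev with ⟨δ, hδ, hball⟩
  set c : ℝ := max a (t₀ - δ/2) with hc
  set d : ℝ := min (a+1) (t₀ + δ/2) with hd
  have hac : a ≤ c := le_max_left _ _
  have hcd : c < d := by
    have h1 : a < t₀ + δ/2 := by rw [ha]; linarith
    have h2 : a < a + 1 := by linarith
    have h3 : t₀ - δ/2 < a + 1 := by rw [ha]; linarith
    have h4 : t₀ - δ/2 < t₀ + δ/2 := by linarith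
    exact max_lt (lt_min h2 h1) (lt_min h3 h4)
  have hd1 : d ≤ a + 1 := min_le_left _ _
  have hmid : ∀ x ∈ Set.Icc c d, f t₀ / 2 ≤ f x := by
    intro x hx
    refine le_of_lt (hball ?_)
    rw [Real.dist_eq, abs_lt]
    constructor
    · have h : t₀ - δ/2 ≤ c := le_max_right _ _
      have := h.trans hx.1
      linarith
    · have h : d ≤ t₀ + δ/2 := min_le_right _ _
      have := hx.2.trans h
      linarith
  have hintg : ∀ u w : ℝ, IntervalIntegrable f volume u w := fun u w => hf.intervalIntegrable u w
  have hsplit : (∫ t in a..c, f t) + (∫ t in c..d, f t) + (∫ t in d..(a+1), f t)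
      = ∫ t in a..(a+1), f t := by
    rw [intervalIntegral.integral_add_adjacent_intervals (hintg a c) (hintg c d),
      intervalIntegral.integral_add_adjacent_intervals (hintg a d) (hintg d (a+1))]
  have h1 : 0 ≤ ∫ t in a..c, f t := intervalIntegral.integral_nonneg hac (fun u _ => hnn u)
  have h3 : 0 ≤ ∫ t in d..(a+1), f t := intervalIntegral.integral_nonneg hd1 (fun u _ => hnn u)
  have h2 : (d - c) * f t₀ / 2 ≤ ∫ t in c..d, f t := by
    have := intervalIntegral.integral_mono_on hcd.le
      (_root_.intervalIntegrable_const (c := f t₀ / 2)) (hintg c d) hmid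
    simpa [intervalIntegral.integral_const, smul_eq_mul] using this
  have h2' : 0 < ∫ t in c..d, f t := by
    have hdc : 0 < d - c := by linarith
    have : 0 < (d - c) * f t₀ / 2 := by positivity
    linarith
  rw [hIa] at hsplit
  linarith

lemma ibp {v vh : ℝ → Phase n} (hv : ContDiff ℝ (⊤ : ℕ∞) v) (hvp : ∀ t, v (t + 1) = v t)
    (hvh : ContDiff ℝ (⊤ : ℕ∞) vh) (hvhp : ∀ t, vh (t + 1) = vh t) :
    ∫ t in (0:ℝ)..1, (∑ j, (v t).2 j * (deriv vh t).1 j)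
      = - ∫ t in (0:ℝ)..1, (∑ j, (deriv v t).2 j * (vh t).1 j) := by
  have hdv : Continuous (deriv v) := (contDiff_deriv_of hv).continuous
  have hdvh : Continuous (deriv vh) := (contDiff_deriv_of hvh).continuous
  have hcv : Continuous v := hv.continuous
  have hcvh : Continuous vh := hvh.continuous
  have cA : Continuous fun t => ∑ j, (deriv v t).2 j * (vh t).1 j := by fun_prop
  have cB : Continuous fun t => ∑ j, (v t).2 j * (deriv vh t).1 j := by fun_prop
  have hg : ∀ t ∈ Set.uIcc (0:ℝ) 1, HasDerivAt (fun t => ∑ j, (v t).2 j * (vh t).1 j)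
      (∑ j, ((deriv v t).2 j * (vh t).1 j + (v t).2 j * (deriv vh t).1 j)) t := by
    intro t _
    exact HasDerivAt.fun_sum fun j _ =>
      (hasDerivAt_snd_coord (hv.differentiable (by simp)) j t).mul
        (hasDerivAt_fst_coord (hvh.differentiable (by simp)) j t)
  have hFTC := intervalIntegral.integral_eq_sub_of_hasDerivAt hg
    (((cA.add cB).congr (by intro t; simp only [Pi.add_apply]; rw [← Finset.sum_add_distrib])).intervalIntegrable 0 1)
  have hper : (∑ j, (v 1).2 j * (vh 1).1 j) = ∑ j, (v 0).2 j * (vh 0).1 j := by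
    have h1 : v 1 = v 0 := by simpa using hvp 0
    have h2 : vh 1 = vh 0 := by simpa using hvhp 0
    rw [h1, h2]
  rw [hper, sub_self] at hFTC
  have hsum : ∫ t in (0:ℝ)..1, (∑ j, ((deriv v t).2 j * (vh t).1 j + (v t).2 j * (deriv vh t).1 j))
      = (∫ t in (0:ℝ)..1, ∑ j, (deriv v t).2 j * (vh t).1 j)
        + ∫ t in (0:ℝ)..1, ∑ j, (v t).2 j * (deriv vh t).1 j := by
    rw [← intervalIntegral.integral_add (cA.intervalIntegrable 0 1) (cB.intervalIntegrable 0 1)]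
    congr 1; funext t; rw [← Finset.sum_add_distrib]
  rw [hsum] at hFTC
  linarith

lemma firstVar_eq (H : Phase n × Phase n → ℝ) (hH : ContDiff ℝ (⊤ : ℕ∞) H) (τ : ℝ)
    {v vh : ℝ → Phase n} (hv : IsLoop v) (hvh : IsLoop vh) :
    firstVariation (fun w => ∫ t in (0:ℝ)..1,
        ((∑ j, (w t).2 j * (deriv w t).1 j) - H (w t, w (t + τ)))) v vh
    = ∫ t in (0:ℝ)..1,
        ((∑ j, ((vh t).2 j * (deriv v t).1 j + (v t).2 j * (deriv vh t).1 j))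
          - fderiv ℝ H (v t, v (t + τ)) (vh t, vh (t + τ))) := by
  have hdvC : Continuous (deriv v) := (contDiff_deriv_of hv.1).continuous
  have hdvhC : Continuous (deriv vh) := (contDiff_deriv_of hvh.1).continuous
  have hvC : Continuous v := hv.1.continuous
  have hvhC : Continuous vh := hvh.1.continuous
  have hHC : Continuous H := hH.continuous
  have hdH : Continuous (fderiv ℝ H) := by
    have h : (0 : WithTop ℕ∞) + 1 ≤ ((⊤ : ℕ∞) : WithTop ℕ∞) := by exact_mod_cast le_top
    exact (hH.fderiv_right h).continuous
  set F : ℝ → ℝ → ℝ := fun s t =>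
    (∑ j, ((v t).2 j + s * (vh t).2 j) * ((deriv v t).1 j + s * (deriv vh t).1 j))
      - H (v t + s • vh t, v (t + τ) + s • vh (t + τ)) with hF
  set F' : ℝ → ℝ → ℝ := fun s t =>
    (∑ j, ((vh t).2 j * ((deriv v t).1 j + s * (deriv vh t).1 j)
        + ((v t).2 j + s * (vh t).2 j) * (deriv vh t).1 j))
      - (fderiv ℝ H (v t + s • vh t, v (t + τ) + s • vh (t + τ))) (vh t, vh (t + τ)) with hF'
  have hrw : (fun s : ℝ => ∫ t in (0:ℝ)..1,
      ((∑ j, ((fun t => v t + s • vh t) t).2 j * ((deriv (fun t => v t + s • vh t)) t).1 j)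
        - H ((fun t => v t + s • vh t) t, (fun t => v t + s • vh t) (t + τ))))
      = fun s => ∫ t in (0:ℝ)..1, F s t := by
    funext s
    congr 1
    funext t
    have hd : deriv (fun t => v t + s • vh t) t = deriv v t + s • deriv vh t :=
      (((hv.1.differentiable (by simp) t).hasDerivAt).add
        (((hvh.1.differentiable (by simp) t).hasDerivAt).const_smul s)).deriv
    rw [hd, hF]
    simp [Prod.fst_add, Prod.snd_add, smul_eq_mul]
  have hFc : Continuous fun p : ℝ × ℝ => F p.1 p.2 := by
    apply Continuous.sub
    · fun_prop
    · apply hHC.comp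
      fun_prop
  have hptC : Continuous fun p : ℝ × ℝ =>
      (v p.2 + p.1 • vh p.2, v (p.2 + τ) + p.1 • vh (p.2 + τ)) := by fun_prop
  have hF'c : Continuous fun p : ℝ × ℝ => F' p.1 p.2 := by
    apply Continuous.sub
    · fun_prop
    · exact (hdH.comp hptC).clm_apply (by fun_prop)
  obtain ⟨C, hC⟩ :=
    ((isCompact_closedBall (0:ℝ) 1).prod isCompact_uIcc).exists_bound_of_continuousOn
      (hF'c.continuousOn (s := closedBall (0:ℝ) 1 ×ˢ Set.uIcc (0:ℝ) 1))
  have hdiff : ∀ (s t : ℝ), HasDerivAt (fun s => F s t) (F' s t) s := by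
    intro s t
    apply HasDerivAt.sub
    · apply HasDerivAt.fun_sum
      intro j _
      have h1 : HasDerivAt (fun s : ℝ => (v t).2 j + s * (vh t).2 j) ((vh t).2 j) s := by
        simpa using (((hasDerivAt_id s).mul_const ((vh t).2 j)).const_add ((v t).2 j))
      have h2 : HasDerivAt (fun s : ℝ => (deriv v t).1 j + s * (deriv vh t).1 j)
          ((deriv vh t).1 j) s := by
        simpa using (((hasDerivAt_id s).mul_const ((deriv vh t).1 j)).const_add ((deriv v t).1 j))
      simpa [mul_comm] using h1.fun_mul h2
    · have hline : HasDerivAt (fun s : ℝ => (v t + s • vh t, v (t + τ) + s • vh (t + τ)))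
          (vh t, vh (t + τ)) s := by
        apply HasDerivAt.prodMk
        · simpa using (((hasDerivAt_id s).smul_const (vh t)).const_add (v t))
        · simpa using (((hasDerivAt_id s).smul_const (vh (t + τ))).const_add (v (t + τ)))
      exact (hH.differentiable (by simp) _).hasFDerivAt.comp_hasDerivAt s hline
  have key := intervalIntegral.hasDerivAt_integral_of_dominated_loc_of_deriv_le
    (F := F) (F' := F') (x₀ := (0:ℝ)) (a := 0) (b := 1) (μ := volume)
    (bound := fun _ => C) (s := ball (0:ℝ) 1) (ball_mem_nhds 0 one_pos)
    (Filter.Eventually.of_forall fun x =>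
      ((hFc.comp (continuous_const.prodMk continuous_id)).aestronglyMeasurable
        : AEStronglyMeasurable (F x) _))
    ((hFc.comp (continuous_const.prodMk continuous_id)).intervalIntegrable 0 1)
    ((hF'c.comp (continuous_const.prodMk continuous_id)).aestronglyMeasurable)
    (Filter.Eventually.of_forall fun t ht x hx => by
      have hmem : (x, t) ∈ closedBall (0:ℝ) 1 ×ˢ Set.uIcc (0:ℝ) 1 :=
        ⟨ball_subset_closedBall hx, Set.uIoc_subset_uIcc ht⟩
      simpa using hC _ hmem)
    (intervalIntegrable_const)
    (Filter.Eventually.of_forall fun t ht x hx => hdiff x t)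
  unfold firstVariation
  rw [hrw, key.2.deriv]
  congr 1
  funext t
  rw [hF']
  norm_num


section AuxLemmas2
variable {n : ℕ}

def alphaF (H : Phase n × Phase n → ℝ) (τ : ℝ) (v : ℝ → Phase n) (t : ℝ) (j : Fin n) : ℝ :=
  (deriv v t).1 j - fderiv ℝ H (v t, v (t + τ)) ((0, Pi.single j 1), 0)
    - fderiv ℝ H (v (t - τ), v t) (0, (0, Pi.single j 1))

def betaF (H : Phase n × Phase n → ℝ) (τ : ℝ) (v : ℝ → Phase n) (t : ℝ) (j : Fin n) : ℝ :=
  (deriv v t).2 j + fderiv ℝ H (v t, v (t + τ)) ((Pi.single j 1, 0), 0)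
    + fderiv ℝ H (v (t - τ), v t) (0, (Pi.single j 1, 0))

def testLoop (H : Phase n × Phase n → ℝ) (τ : ℝ) (v : ℝ → Phase n) : ℝ → Phase n :=
  fun t => (fun j => -(betaF H τ v t j), fun j => alphaF H τ v t j)

section TL
variable {H : Phase n × Phase n → ℝ} {τ : ℝ} {v : ℝ → Phase n}

lemma contDiff_dH1 (hH : ContDiff ℝ (⊤ : ℕ∞) H) (hv : ContDiff ℝ (⊤ : ℕ∞) v) :
    ContDiff ℝ (⊤ : ℕ∞) (fun t => fderiv ℝ H (v t, v (t + τ))) := by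
  have htop : ((⊤ : ℕ∞) : WithTop ℕ∞) + 1 ≤ ((⊤ : ℕ∞) : WithTop ℕ∞) := by exact_mod_cast le_top
  exact (hH.fderiv_right htop).comp (hv.prodMk (hv.comp (contDiff_id.add contDiff_const)))

lemma contDiff_dH2 (hH : ContDiff ℝ (⊤ : ℕ∞) H) (hv : ContDiff ℝ (⊤ : ℕ∞) v) :
    ContDiff ℝ (⊤ : ℕ∞) (fun t => fderiv ℝ H (v (t - τ), v t)) := by
  have htop : ((⊤ : ℕ∞) : WithTop ℕ∞) + 1 ≤ ((⊤ : ℕ∞) : WithTop ℕ∞) := by exact_mod_cast le_top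
  exact (hH.fderiv_right htop).comp ((hv.comp (contDiff_id.sub contDiff_const)).prodMk hv)

lemma contDiff_alphaF (hH : ContDiff ℝ (⊤ : ℕ∞) H) (hv : ContDiff ℝ (⊤ : ℕ∞) v) (j : Fin n) :
    ContDiff ℝ (⊤ : ℕ∞) (fun t => alphaF H τ v t j) := by
  have hdv : ContDiff ℝ (⊤ : ℕ∞) (deriv v) := contDiff_deriv_of hv
  have hco : ContDiff ℝ (⊤ : ℕ∞) (fun t => (deriv v t).1 j) :=
    (((ContinuousLinearMap.proj j).comp
      (ContinuousLinearMap.fst ℝ (Fin n → ℝ) (Fin n → ℝ))).contDiff).comp hdv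
  exact (hco.sub ((contDiff_dH1 hH hv).clm_apply contDiff_const)).sub
    ((contDiff_dH2 hH hv).clm_apply contDiff_const)

lemma contDiff_betaF (hH : ContDiff ℝ (⊤ : ℕ∞) H) (hv : ContDiff ℝ (⊤ : ℕ∞) v) (j : Fin n) :
    ContDiff ℝ (⊤ : ℕ∞) (fun t => betaF H τ v t j) := by
  have hdv : ContDiff ℝ (⊤ : ℕ∞) (deriv v) := contDiff_deriv_of hv
  have hco : ContDiff ℝ (⊤ : ℕ∞) (fun t => (deriv v t).2 j) :=
    (((ContinuousLinearMap.proj j).comp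
      (ContinuousLinearMap.snd ℝ (Fin n → ℝ) (Fin n → ℝ))).contDiff).comp hdv
  exact (hco.add ((contDiff_dH1 hH hv).clm_apply contDiff_const)).add
    ((contDiff_dH2 hH hv).clm_apply contDiff_const)

lemma alphaF_periodic (hvp : ∀ t, v (t + 1) = v t) (t : ℝ) (j : Fin n) :
    alphaF H τ v (t + 1) j = alphaF H τ v t j := by
  have e1 : v (t + 1) = v t := hvp t
  have e2 : v (t + 1 + τ) = v (t + τ) := by rw [show t + 1 + τ = (t + τ) + 1 by ring, hvp]
  have e3 : v (t + 1 - τ) = v (t - τ) := by rw [show t + 1 - τ = (t - τ) + 1 by ring, hvp]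
  unfold alphaF
  rw [deriv_periodic hvp, e1, e2, e3]

lemma betaF_periodic (hvp : ∀ t, v (t + 1) = v t) (t : ℝ) (j : Fin n) :
    betaF H τ v (t + 1) j = betaF H τ v t j := by
  have e1 : v (t + 1) = v t := hvp t
  have e2 : v (t + 1 + τ) = v (t + τ) := by rw [show t + 1 + τ = (t + τ) + 1 by ring, hvp]
  have e3 : v (t + 1 - τ) = v (t - τ) := by rw [show t + 1 - τ = (t - τ) + 1 by ring, hvp]
  unfold betaF
  rw [deriv_periodic hvp, e1, e2, e3]

lemma testLoop_contDiff (hH : ContDiff ℝ (⊤ : ℕ∞) H) (hv : ContDiff ℝ (⊤ : ℕ∞) v) :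
    ContDiff ℝ (⊤ : ℕ∞) (testLoop H τ v) :=
  (contDiff_pi.mpr fun j => (contDiff_betaF hH hv j).neg).prodMk
    (contDiff_pi.mpr fun j => contDiff_alphaF hH hv j)

lemma testLoop_periodic (hvp : ∀ t, v (t + 1) = v t) (t : ℝ) :
    testLoop H τ v (t + 1) = testLoop H τ v t := by
  unfold testLoop
  ext j
  · simp [alphaF_periodic hvp, betaF_periodic hvp]
  · simp [alphaF_periodic hvp, betaF_periodic hvp]
end TL

lemma pointwise_id (H : Phase n × Phase n → ℝ) (τ : ℝ) (v : ℝ → Phase n) (t : ℝ) :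
    (∑ j, (testLoop H τ v t).2 j * (deriv v t).1 j)
      - (∑ j, (deriv v t).2 j * (testLoop H τ v t).1 j)
      - fderiv ℝ H (v t, v (t + τ)) (testLoop H τ v t, 0)
      - fderiv ℝ H (v (t - τ), v t) (0, testLoop H τ v t)
    = ∑ j, ((alphaF H τ v t j)^2 + (betaF H τ v t j)^2) := by
  rw [clm_left_decomp, clm_right_decomp]
  simp only [testLoop]
  rw [show ∀ a b c d e f : ℝ, a - b - (c + d) - (e + f) = a - b - c - d - e - f by intros; ring]
  rw [← Finset.sum_sub_distrib, ← Finset.sum_sub_distrib, ← Finset.sum_sub_distrib,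
    ← Finset.sum_sub_distrib, ← Finset.sum_sub_distrib]
  refine Finset.sum_congr rfl fun j _ => ?_
  simp only [alphaF, betaF]
  ring

end AuxLemmas2

end AuxLemmas

theorem stmt17 {n : ℕ} (hn : 1 ≤ n)
    (H : Phase n × Phase n → ℝ) (hH : ContDiff ℝ (⊤ : ℕ∞) H) (τ : ℝ)
    (v : ℝ → Phase n) (hv : IsLoop v)
    (hcrit : IsCritPt
      (fun w => ∫ t in (0:ℝ)..1,
        ((∑ j, (w t).2 j * (deriv w t).1 j) - H (w t, w (t + τ)))) v) :
    ∀ t : ℝ,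
      deriv v t
        = hamVF (fun x => H (x, v (t + τ))) (v t)
          + hamVF (fun y => H (v (t - τ), y)) (v t) := by
  have hdvC : Continuous (deriv v) := (contDiff_deriv_of hv.1).continuous
  have hvC : Continuous v := hv.1.continuous
  have hT : IsLoop (testLoop H τ v) :=
    ⟨testLoop_contDiff hH hv.1, testLoop_periodic hv.2⟩
  have hTC : Continuous (testLoop H τ v) := hT.1.continuous
  have hdTC : Continuous (deriv (testLoop H τ v)) := (contDiff_deriv_of hT.1).continuous
  have hdH1C : Continuous (fun t => fderiv ℝ H (v t, v (t + τ))) :=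
    (contDiff_dH1 hH hv.1).continuous
  have hdH2C : Continuous (fun t => fderiv ℝ H (v (t - τ), v t)) :=
    (contDiff_dH2 hH hv.1).continuous
  have cTα : ∀ j : Fin n, Continuous fun t => (testLoop H τ v t).2 j :=
    fun j => (contDiff_alphaF hH hv.1 j).continuous
  have cTβ : ∀ j : Fin n, Continuous fun t => (testLoop H τ v t).1 j :=
    fun j => ((contDiff_betaF hH hv.1 j).continuous).neg
  have cd1 : ∀ j : Fin n, Continuous fun t => (deriv v t).1 j := fun j => by fun_prop
  have cd2 : ∀ j : Fin n, Continuous fun t => (deriv v t).2 j := fun j => by fun_prop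
  have cdT1 : ∀ j : Fin n, Continuous fun t => (deriv (testLoop H τ v) t).1 j :=
    fun j => by fun_prop
  have c1 : Continuous fun t => ∑ j, (testLoop H τ v t).2 j * (deriv v t).1 j :=
    continuous_finset_sum _ fun j _ => (cTα j).mul (cd1 j)
  have c2 : Continuous fun t => ∑ j, (v t).2 j * (deriv (testLoop H τ v) t).1 j :=
    continuous_finset_sum _ fun j _ => (by fun_prop : Continuous fun t => (v t).2 j).mul (cdT1 j)
  have c5 : Continuous fun t => ∑ j, (deriv v t).2 j * (testLoop H τ v t).1 j :=
    continuous_finset_sum _ fun j _ => (cd2 j).mul (cTβ j)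
  have c3 : Continuous fun t => fderiv ℝ H (v t, v (t + τ)) (testLoop H τ v t, 0) :=
    hdH1C.clm_apply (hTC.prodMk continuous_const)
  have c4 : Continuous fun t => fderiv ℝ H (v t, v (t + τ)) (0, testLoop H τ v (t + τ)) :=
    hdH1C.clm_apply (continuous_const.prodMk (hTC.comp (by fun_prop)))
  have c6 : Continuous fun t => fderiv ℝ H (v (t - τ), v t) (0, testLoop H τ v t) :=
    hdH2C.clm_apply (continuous_const.prodMk hTC)
  have h0 := hcrit (testLoop H τ v) hT
  rw [firstVar_eq H hH τ hv hT] at h0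
  have hsplit : (fun t => (∑ j, ((testLoop H τ v t).2 j * (deriv v t).1 j
        + (v t).2 j * (deriv (testLoop H τ v) t).1 j))
      - fderiv ℝ H (v t, v (t + τ)) (testLoop H τ v t, testLoop H τ v (t + τ)))
      = fun t => ((∑ j, (testLoop H τ v t).2 j * (deriv v t).1 j)
          + (∑ j, (v t).2 j * (deriv (testLoop H τ v) t).1 j))
        - (fderiv ℝ H (v t, v (t + τ)) (testLoop H τ v t, 0)
          + fderiv ℝ H (v t, v (t + τ)) (0, testLoop H τ v (t + τ))) := by
    funext t
    rw [Finset.sum_add_distrib, ← map_add]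
    congr 2
    ext <;> simp
  rw [hsplit] at h0
  rw [intervalIntegral.integral_sub ((c1.fun_add c2).intervalIntegrable 0 1)
      ((c3.fun_add c4).intervalIntegrable 0 1),
    intervalIntegral.integral_add (c1.intervalIntegrable 0 1) (c2.intervalIntegrable 0 1),
    intervalIntegral.integral_add (c3.intervalIntegrable 0 1) (c4.intervalIntegrable 0 1)] at h0
  rw [ibp hv.1 hv.2 hT.1 (fun t => testLoop_periodic hv.2 t)] at h0
  have hshift : ∫ t in (0:ℝ)..1, fderiv ℝ H (v t, v (t + τ)) (0, testLoop H τ v (t + τ))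
      = ∫ t in (0:ℝ)..1, fderiv ℝ H (v (t - τ), v t) (0, testLoop H τ v t) := by
    have hgp : ∀ u, fderiv ℝ H (v (u + 1 - τ), v (u + 1)) (0, testLoop H τ v (u + 1))
        = fderiv ℝ H (v (u - τ), v u) (0, testLoop H τ v u) := by
      intro u
      rw [show u + 1 - τ = (u - τ) + 1 by ring, hv.2, hv.2, testLoop_periodic hv.2]
    have hkey := integral_shift
      (g := fun u => fderiv ℝ H (v (u - τ), v u) (0, testLoop H τ v u)) hgp τ
    rw [← hkey]
    congr 1
    funext t
    rw [show t + τ - τ = t by ring]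
  rw [hshift] at h0
  have hre : ∫ t in (0:ℝ)..1,
      (∑ j, ((alphaF H τ v t j)^2 + (betaF H τ v t j)^2))
      = (∫ t in (0:ℝ)..1, ∑ j, (testLoop H τ v t).2 j * (deriv v t).1 j)
        - (∫ t in (0:ℝ)..1, ∑ j, (deriv v t).2 j * (testLoop H τ v t).1 j)
        - (∫ t in (0:ℝ)..1, fderiv ℝ H (v t, v (t + τ)) (testLoop H τ v t, 0))
        - (∫ t in (0:ℝ)..1, fderiv ℝ H (v (t - τ), v t) (0, testLoop H τ v t)) := by
    rw [← intervalIntegral.integral_sub (c1.intervalIntegrable 0 1) (c5.intervalIntegrable 0 1),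
      ← intervalIntegral.integral_sub ((c1.fun_sub c5).intervalIntegrable 0 1)
        (c3.intervalIntegrable 0 1),
      ← intervalIntegral.integral_sub (((c1.fun_sub c5).fun_sub c3).intervalIntegrable 0 1)
        (c6.intervalIntegrable 0 1)]
    congr 1
    funext t
    exact (pointwise_id H τ v t).symm
  have hre0 : ∫ t in (0:ℝ)..1,
      (∑ j, ((alphaF H τ v t j)^2 + (betaF H τ v t j)^2)) = 0 := by
    rw [hre]; linarith
  have hzero : ∀ t, (∑ j, ((alphaF H τ v t j)^2 + (betaF H τ v t j)^2)) = 0 := by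
    apply zero_of_integral_zero ?_ ?_ ?_ hre0
    · exact continuous_finset_sum _ fun j _ =>
        (((contDiff_alphaF hH hv.1 j).continuous.pow 2).add
          ((contDiff_betaF hH hv.1 j).continuous.pow 2))
    · intro t
      exact Finset.sum_congr rfl fun j _ => by
        rw [alphaF_periodic hv.2, betaF_periodic hv.2]
    · intro t
      exact Finset.sum_nonneg fun j _ => by positivity
  have hab : ∀ t (j : Fin n), alphaF H τ v t j = 0 ∧ betaF H τ v t j = 0 := by
    intro t j
    have hj := (Finset.sum_eq_zero_iff_of_nonneg
      (fun j _ => by positivity)).mp (hzero t) j (Finset.mem_univ j)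
    have ha2 : (alphaF H τ v t j)^2 = 0 := by nlinarith [sq_nonneg (betaF H τ v t j)]
    have hb2 : (betaF H τ v t j)^2 = 0 := by nlinarith [sq_nonneg (alphaF H τ v t j)]
    exact ⟨sq_eq_zero_iff.mp ha2, sq_eq_zero_iff.mp hb2⟩
  intro t
  ext i
  · have hα := (hab t i).1
    unfold alphaF at hα
    simp only [hamVF, Prod.fst_add, Pi.add_apply,
      fderiv_partial_left H hH (v t) (v (t + τ)),
      fderiv_partial_right H hH (v (t - τ)) (v t)]
    linarith
  · have hβ := (hab t i).2
    unfold betaF at hβ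
    simp only [hamVF, Prod.snd_add, Pi.add_apply,
      fderiv_partial_left H hH (v t) (v (t + τ)),
      fderiv_partial_right H hH (v (t - τ)) (v t)]
    linarith
end
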